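/- arXiv:1409.1340 — 7 statements merged into one kernel-verified Lean document; each statement's English description precedes it below -/
import Mathlib

section
/- Let M be a monoid containing elements s, t with s*t = 1 and t*s ≠ 1. If t^a * s^b = t^{a'} * s^{b'} for natural numbers a, b, a', b', then a = a' and b = b'. -/
/-!
Since `s ^ n * t ^ n = 1`, powers of `t` are left-cancellable and powers of `s` are
right-cancellable, so an equation `t ^ a * s ^ b = t ^ a' * s ^ b'` reduces to `t ^ c * s ^ e = 1`.
That forces `c = e = 0`: otherwise `t` would have a right inverse or `s` a left inverse, which must
then be `s` resp. `t`, giving `t * s = 1`.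
-/

section OneSidedInverse

variable {M : Type*} [Monoid M] {s t : M}

theorem pow_mul_pow_eq_one_iff_of_mul_eq_one (h1 : s * t = 1) (h2 : t * s ≠ 1) {c d : ℕ} :
    t ^ c * s ^ d = 1 ↔ c = 0 ∧ d = 0 := by
  refine ⟨fun h ↦ ?_, fun ⟨hc, hd⟩ ↦ by rw [hc, hd, pow_zero, pow_zero, one_mul]⟩
  rcases c with _ | c
  · rcases d with _ | d
    · exact ⟨rfl, rfl⟩
    · rw [pow_zero, one_mul, pow_succ] at h
      exact absurd (left_inv_eq_right_inv h h1 ▸ h) h2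
  · rw [pow_succ', mul_assoc] at h
    exact absurd (by rwa [← left_inv_eq_right_inv h1 h] at h) h2

theorem eq_zero_and_eq_of_pow_eq_pow_mul_pow (h1 : s * t = 1) (h2 : t * s ≠ 1) {b b' c : ℕ}
    (h : s ^ b = t ^ c * s ^ b') : c = 0 ∧ b = b' := by
  rcases le_total b b' with hle | hge
  · obtain ⟨e, rfl⟩ := Nat.exists_eq_add_of_le' hle
    have hone : t ^ c * s ^ e = 1 :=
      isRightRegular_of_mul_eq_one (pow_mul_pow_eq_one b h1) <| by
        beta_reduce; rw [one_mul, mul_assoc, ← pow_add, h]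
    obtain ⟨hc, he⟩ := (pow_mul_pow_eq_one_iff_of_mul_eq_one h1 h2).1 hone
    exact ⟨hc, by rw [he, zero_add]⟩
  · obtain ⟨e, rfl⟩ := Nat.exists_eq_add_of_le' hge
    have hse : s ^ e = t ^ c :=
      isRightRegular_of_mul_eq_one (pow_mul_pow_eq_one b' h1) <| by
        beta_reduce; rw [← pow_add, h]
    have hone : t ^ (c + e) * s ^ 0 = 1 := by
      rw [pow_zero, mul_one, pow_add, ← hse, pow_mul_pow_eq_one e h1]
    obtain ⟨hce, -⟩ := (pow_mul_pow_eq_one_iff_of_mul_eq_one h1 h2).1 hone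
    exact ⟨by omega, by omega⟩

end OneSidedInverse

theorem pow_mul_pow_injective_of_one_sided_inverse
    {M : Type*} [Monoid M] (s t : M) (h1 : s * t = 1) (h2 : t * s ≠ 1)
    (a b a' b' : ℕ) (h : t ^ a * s ^ b = t ^ a' * s ^ b') :
    a = a' ∧ b = b' := by
  wlog hle : a ≤ a' generalizing a b a' b'
  · obtain ⟨ha, hb⟩ := this a' b' a b h.symm (le_of_not_ge hle)
    exact ⟨ha.symm, hb.symm⟩
  obtain ⟨c, rfl⟩ := Nat.exists_eq_add_of_le hle
  have hcancel : s ^ b = t ^ c * s ^ b' :=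
    isLeftRegular_of_mul_eq_one (pow_mul_pow_eq_one a h1) <| by
      beta_reduce; rw [h, pow_add, mul_assoc]
  obtain ⟨hc, hb⟩ := eq_zero_and_eq_of_pow_eq_pow_mul_pow h1 h2 hcancel
  exact ⟨by rw [hc, add_zero], hb⟩
end

section
/- Let M be a residually finite monoid and A a set. Then the set of periodic configurations (configurations with finite orbit under the shift action) is dense in A^M for the product (prodiscrete) topology: for every x ∈ A^M and every finite F ⊆ M there exists a periodic configuration y ∈ A^M agreeing with x on F. -/
/-! Separating the finitely many pairs of distinct points of `F` by finite quotients and taking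
their product gives a single homomorphism `φ : M →* N` to a finite monoid that is injective on `F`.
Any configuration of the form `z ∘ φ` is periodic, since its shift by `m` only depends on `φ m`;
choosing `z := x ∘ (φ restricted to F)⁻¹` makes it agree with `x` on `F`. -/

section

universe u

variable {M : Type u} [Monoid M]

theorem exists_monoidHom_finite_injOn
    (hres : ∀ m m' : M, m ≠ m' →
      ∃ (N : Type) (_ : Monoid N), Finite N ∧ ∃ φ : M →* N, φ m ≠ φ m')
    (F : Finset M) :
    ∃ (N : Type u) (_ : Monoid N) (_ : Finite N) (φ : M →* N), Set.InjOn φ F := by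
  let P := {p : F × F // p.1 ≠ p.2}
  choose N instN hfin φ hφ using fun p : P => hres p.1.1 p.1.2 (Subtype.coe_injective.ne p.2)
  let := instN
  have := hfin
  refine ⟨∀ p, N p, inferInstance, inferInstance, MonoidHom.pi φ, ?_⟩
  intro m hm m' hm' hφmm'
  by_contra hne
  let p : P := ⟨(⟨m, hm⟩, ⟨m', hm'⟩), fun h => hne (congrArg Subtype.val h)⟩
  exact hφ p (congrFun hφmm' p)

theorem finite_range_shift_comp_monoidHom {A N : Type*} [Monoid N] [Finite N]
    (φ : M →* N) (z : N → A) :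
    (Set.range fun m : M => fun u => (z ∘ φ) (u * m)).Finite := by
  refine (Set.finite_range fun n : N => fun u => z (φ u * n)).subset ?_
  rintro _ ⟨m, rfl⟩
  exact ⟨φ m, by simp only [Function.comp_apply, map_mul]⟩

end

theorem periodic_configurations_dense_of_residually_finite
    {M : Type*} [Monoid M] {A : Type*}
    (hres : ∀ m m' : M, m ≠ m' →
      ∃ (N : Type) (instN : Monoid N), Finite N ∧
        ∃ φ : @MonoidHom M N _ instN.toMulOneClass.toMulOne, φ m ≠ φ m')
    (x : M → A) (F : Finset M) :
    ∃ y : M → A,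
      (Set.range fun m : M => (fun u => y (u * m))).Finite ∧
      ∀ f ∈ F, y f = x f := by
  obtain ⟨N, _, _, φ, hφ⟩ := exists_monoidHom_finite_injOn hres F
  refine ⟨(x ∘ Function.invFunOn φ F) ∘ φ, finite_range_shift_comp_monoidHom φ _, ?_⟩
  intro f hf
  exact congrArg x (hφ.leftInvOn_invFunOn hf)
end

section
/- Let M be a monoid and A a set. A map τ : A^M → A^M is a cellular automaton (i.e., shift-equivariant and uniformly continuous for the prodiscrete uniform structure) if and only if there exist a finite subset S ⊆ M and a map μ : A^S → A such that τ(x)(m) = μ((m•x)|_S) for all x ∈ A^M and m ∈ M. -/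
/-- The prodiscrete uniform structure on `M → A` (product of discrete uniformities). -/
def prodiscrete (M A : Type*) : UniformSpace (M → A) :=
  @Pi.uniformSpace M (fun _ => A) (fun _ => ⊥)

/-!
The sets `{(x, y) | x = y on F}` with `F ⊆ M` finite form a basis of the prodiscrete uniformity,
so `τ` is uniformly continuous iff each finite window of `τ x` is determined by a finite window
of `x`. Applied to the cell `1`, this gives a finite `S` and `μ` with `τ x 1 = μ (x|_S)`, and
equivariance moves this to every cell: `τ x m = τ (m • x) 1`. Conversely, a local rule is
equivariant by associativity, and `τ x` on a finite `G` only reads `x` on `⋃ n ∈ G, S * n`.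
-/

open Filter Set Uniformity

theorem Finset.exists_comp_restrict_of_eqOn {ι α β : Type*} {S : Finset ι} (hS : S.Nonempty)
    {f : (ι → α) → β} (hf : ∀ x y, EqOn x y S → f x = f y) :
    ∃ μ : (S → α) → β, ∀ x, f x = μ (S.restrict x) := by
  classical
  -- `i₀` supplies the values off `S`; without it `α` might be empty while `S → α` is not
  obtain ⟨i₀, hi₀⟩ := hS
  exact ⟨fun p => f fun i => if h : i ∈ S then p ⟨i, h⟩ else p ⟨i₀, hi₀⟩,
    fun x => hf _ _ fun i hi => by simp [Finset.mem_coe.1 hi]⟩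

section Prodiscrete

attribute [local instance] prodiscrete

variable {M A : Type*}

theorem prodiscrete_uniformity_hasBasis :
    (𝓤 (M → A)).HasBasis (fun F : Set M => F.Finite) fun F => {p | EqOn p.1 p.2 F} := by
  have h : 𝓤 (M → A) = ⨅ m : M, 𝓟 {p : (M → A) × (M → A) | p.1 m = p.2 m} := by
    let _ : UniformSpace A := ⊥
    rw [show 𝓤 (M → A) = 𝓤[Pi.uniformSpace fun _ : M => A] from rfl, Pi.uniformity]
    simp only [bot_uniformity, comap_principal]
    rfl
  rw [h]
  convert hasBasis_iInf_principal_finite _ using 1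
  ext F p
  simp [EqOn]

theorem uniformContinuous_prodiscrete_iff {N B : Type*} {τ : (M → A) → (N → B)} :
    UniformContinuous τ ↔
      ∀ G : Set N, G.Finite → ∃ F : Set M, F.Finite ∧ ∀ x y, EqOn x y F → EqOn (τ x) (τ y) G :=
  prodiscrete_uniformity_hasBasis.uniformContinuous_iff prodiscrete_uniformity_hasBasis

variable [Monoid M] {τ : (M → A) → (M → A)} {S : Finset M} {μ : (S → A) → A}

theorem shift_equivariant_of_local_rule (hμ : ∀ x m, τ x m = μ (fun s => x (↑s * m))) (m : M)
    (x : M → A) : τ (fun u => x (u * m)) = fun u => τ x (u * m) := by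
  funext u
  simp only [hμ, mul_assoc]

theorem uniformContinuous_of_local_rule (hμ : ∀ x m, τ x m = μ (fun s => x (↑s * m))) :
    UniformContinuous τ := by
  refine uniformContinuous_prodiscrete_iff.2 fun G hG =>
    ⟨⋃ n ∈ G, (· * n) '' S, hG.biUnion fun n _ => S.finite_toSet.image _, fun x y hxy n hn => ?_⟩
  simp only [hμ]
  congr 1
  funext s
  exact hxy (mem_biUnion hn (mem_image_of_mem _ s.2))

end Prodiscrete

theorem cellular_automaton_iff_local_rule
    {M A : Type*} [Monoid M] (τ : (M → A) → (M → A)) :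
    ((∀ (m : M) (x : M → A), τ (fun u => x (u * m)) = fun u => τ x (u * m)) ∧
      @UniformContinuous _ _ (prodiscrete M A) (prodiscrete M A) τ) ↔
    ∃ (S : Finset M) (μ : (S → A) → A),
      ∀ (x : M → A) (m : M), τ x m = μ (fun s => x (↑s * m)) := by
  constructor
  · rintro ⟨hshift, hτ⟩
    classical
    obtain ⟨F, hF, hF1⟩ := uniformContinuous_prodiscrete_iff.1 hτ {1} (finite_singleton 1)
    obtain ⟨μ, hμ⟩ := Finset.exists_comp_restrict_of_eqOn (Finset.insert_nonempty 1 hF.toFinset)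
      (f := fun x => τ x 1) fun x y hxy =>
        hF1 x y (hxy.mono fun n hn => by simp [hn]) (mem_singleton 1)
    refine ⟨_, μ, fun x m => ?_⟩
    have h := hμ fun u => x (u * m)
    simp only [hshift, one_mul] at h
    exact h
  · rintro ⟨S, μ, hμ⟩
    exact ⟨shift_equivariant_of_local_rule hμ, uniformContinuous_of_local_rule hμ⟩
end

section
/- Let M be a monoid and A a finite set. Then every bijective cellular automaton τ : A^M → A^M is reversible: its inverse map τ⁻¹ is also a cellular automaton. -/
theorem Equiv.uniformContinuous_symm_of_continuous {X Y : Type*} [UniformSpace X]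
    [UniformSpace Y] [CompactSpace X] [T2Space Y] (e : X ≃ Y) (he : Continuous e) :
    UniformContinuous e.symm :=
  haveI : CompactSpace Y := e.surjective.compactSpace he
  CompactSpace.uniformContinuous_of_continuous he.homeoOfEquivCompactToT2.symm.continuous

section prodiscrete

variable (M A : Type*)

theorem prodiscrete_compactSpace [Finite A] :
    @CompactSpace (M → A) (prodiscrete M A).toTopologicalSpace :=
  letI : UniformSpace A := ⊥
  haveI : DiscreteTopology A := ⟨rfl⟩
  Pi.compactSpace

theorem prodiscrete_t2Space : @T2Space (M → A) (prodiscrete M A).toTopologicalSpace :=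
  letI : UniformSpace A := ⊥
  haveI : DiscreteTopology A := ⟨rfl⟩
  Pi.t2Space

end prodiscrete

theorem bijective_cellular_automaton_reversible
    {M A : Type*} [Monoid M] [Finite A] (τ : (M → A) → (M → A))
    (hequiv : ∀ (m : M) (x : M → A), τ (fun u => x (u * m)) = fun u => τ x (u * m))
    (huc : @UniformContinuous _ _ (prodiscrete M A) (prodiscrete M A) τ)
    (hbij : Function.Bijective τ) :
    ∃ σ : (M → A) → (M → A),
      (∀ x, σ (τ x) = x) ∧ (∀ x, τ (σ x) = x) ∧
      (∀ (m : M) (x : M → A), σ (fun u => x (u * m)) = fun u => σ x (u * m)) ∧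
      @UniformContinuous _ _ (prodiscrete M A) (prodiscrete M A) σ := by
  let := prodiscrete M A
  have := prodiscrete_compactSpace M A
  have := prodiscrete_t2Space M A
  let e := Equiv.ofBijective τ hbij
  refine ⟨e.symm, e.symm_apply_apply, e.apply_symm_apply, fun m => ?_,
    e.uniformContinuous_symm_of_continuous huc.continuous⟩
  exact Function.Semiconj.inverse_left (f := τ) (ga := fun x u => x (u * m))
    (gb := fun x u => x (u * m)) (hequiv m) e.symm_apply_apply e.apply_symm_apply
end

section
/- Let M be a monoid and A a set with at least two elements. If M contains elements p, q with p*q = 1 and q*p ≠ 1, then the cellular automaton τ : A^M → A^M defined by τ(x)(m) := x(p*m) is injective but not surjective. -/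
theorem bicyclic_gives_injective_non_surjective_ca
    {M A : Type*} [Monoid M] [Nontrivial A]
    (p q : M) (h1 : p * q = 1) (h2 : q * p ≠ 1) :
    Function.Injective (fun (x : M → A) (m : M) => x (p * m)) ∧
      ¬ Function.Surjective (fun (x : M → A) (m : M) => x (p * m)) := by
  constructor
  · intro x y hxy
    funext m
    have := congrFun hxy (q * m)
    simpa [← mul_assoc, h1] using this
  · rintro hs
    classical
    obtain ⟨a, b, hab⟩ := exists_pair_ne A
    obtain ⟨x, hx⟩ := hs (fun m => if m = 1 then a else b)
    have h1' := congrFun hx 1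
    have h2' := congrFun hx (q * p)
    simp [← mul_assoc, h1, h2] at h1' h2'
    exact hab (h1' ▸ h2' ▸ rfl)
end

section
/- Let M be a residually finite monoid and A a finite set. Then every injective cellular automaton τ : A^M → A^M is surjective (i.e., M is surjunctive). -/
open Set Function

universe u

def IsResiduallyFinite (M : Type*) [Monoid M] : Prop :=
  ∀ m m' : M, m ≠ m' → ∃ (N : Type) (_ : Monoid N), Finite N ∧ ∃ φ : M →* N, φ m ≠ φ m'

def IsShiftEquivariant {M A : Type*} [Monoid M] (τ : (M → A) → (M → A)) : Prop :=
  ∀ (m : M) (x : M → A), τ (fun u => x (u * m)) = fun u => τ x (u * m)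

theorem IsResiduallyFinite.exists_injOn {M : Type u} [Monoid M] (hM : IsResiduallyFinite M)
    {S : Set M} (hS : S.Finite) :
    ∃ (N : Type u) (_ : Monoid N), Finite N ∧ ∃ Φ : M →* N, InjOn Φ S := by
  let ι := {p : M × M // p.1 ∈ S ∧ p.2 ∈ S ∧ p.1 ≠ p.2}
  have : Finite ι := ((hS.prod hS).subset fun p hp => ⟨hp.1, hp.2.1⟩).to_subtype
  choose N _ _ φ hφ using fun p : ι => hM p.1.1 p.1.2 p.2.2.2
  refine ⟨∀ p, N p, inferInstance, inferInstance, MonoidHom.pi φ, fun m hm m' hm' h => ?_⟩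
  by_contra hne
  exact hφ ⟨(m, m'), hm, hm', hne⟩ (congrFun h _)

theorem dense_of_forall_finite_exists_eqOn {ι X : Type*} [TopologicalSpace X] [DiscreteTopology X]
    {D : Set (ι → X)} (h : ∀ (y : ι → X) (F : Set ι), F.Finite → ∃ x ∈ D, EqOn x y F) :
    Dense D := by
  intro y
  rw [mem_closure_iff_nhds]
  intro U hU
  rw [nhds_pi, Filter.mem_pi] at hU
  obtain ⟨F, hF, t, ht, hsub⟩ := hU
  obtain ⟨x, hxD, hxy⟩ := h y F hF
  refine ⟨x, hsub fun i hi => ?_, hxD⟩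
  rw [hxy hi]
  exact mem_of_mem_nhds (ht i)

namespace IsShiftEquivariant

variable {M N A : Type*} [Monoid M] [Monoid N] {τ : (M → A) → (M → A)}

theorem mapsTo_range_comp_monoidHom (hτ : IsShiftEquivariant τ) (Φ : M →* N) :
    MapsTo τ (range (· ∘ Φ)) (range (· ∘ Φ)) := by
  rintro _ ⟨z, rfl⟩
  -- `τ (z ∘ Φ) u` is the value at `1` of `τ` applied to the shift of `z ∘ Φ` by `u`,
  -- and that shift is `(fun k => z (k * Φ u)) ∘ Φ`.
  refine ⟨fun n => τ ((fun k => z (k * n)) ∘ Φ) 1, funext fun u => ?_⟩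
  have := congrFun (hτ u (z ∘ Φ)) 1
  simp only [one_mul, comp_apply, map_mul] at this ⊢
  exact this

theorem surjOn_range_comp_monoidHom [Finite N] [Finite A] (hτ : IsShiftEquivariant τ)
    (hinj : Injective τ) (Φ : M →* N) :
    SurjOn τ (range (· ∘ Φ)) (range (· ∘ Φ)) :=
  ((finite_range _).injOn_iff_bijOn_of_mapsTo (hτ.mapsTo_range_comp_monoidHom Φ)
    |>.mp hinj.injOn).surjOn

theorem denseRange_of_injective [Finite A] [TopologicalSpace A] [DiscreteTopology A]
    (hM : IsResiduallyFinite M) (hτ : IsShiftEquivariant τ) (hinj : Injective τ) :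
    DenseRange τ := by
  refine dense_of_forall_finite_exists_eqOn fun y F hF => ?_
  obtain ⟨N, _, _, Φ, hΦ⟩ := hM.exists_injOn hF
  obtain ⟨x, -, hx⟩ := hτ.surjOn_range_comp_monoidHom hinj Φ ⟨y ∘ invFunOn Φ F, rfl⟩
  refine ⟨_, ⟨x, hx⟩, fun m hm => ?_⟩
  simp only [comp_apply, hΦ.leftInvOn_invFunOn hm]

end IsShiftEquivariant

theorem residually_finite_monoid_is_surjunctive
    {M : Type*} [Monoid M] {A : Type*} [Finite A]
    (hres : ∀ m m' : M, m ≠ m' →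
      ∃ (N : Type) (instN : Monoid N), Finite N ∧
        ∃ φ : @MonoidHom M N _ instN.toMulOneClass.toMulOne, φ m ≠ φ m')
    (τ : (M → A) → (M → A))
    (hequiv : ∀ (m : M) (x : M → A), τ (fun u => x (u * m)) = fun u => τ x (u * m))
    (huc : @UniformContinuous _ _ (prodiscrete M A) (prodiscrete M A) τ)
    (hinj : Function.Injective τ) :
    Function.Surjective τ := by
  let _ : UniformSpace A := ⊥
  have _ : DiscreteTopology A := ⟨rfl⟩
  have hτ : UniformContinuous τ := huc
  have hclosed : IsClosed (range τ) := (isCompact_range hτ.continuous).isClosed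
  have hdense : DenseRange τ :=
    IsShiftEquivariant.denseRange_of_injective hres hequiv hinj
  rw [← range_eq_univ, ← hclosed.closure_eq, hdense.closure_eq]
end

section
/- Let M be a monoid and N a submonoid of M. If a cellular automaton σ : A^N → A^N over N is injective, then the induced cellular automaton σ^M : A^M → A^M (with the same memory set S ⊆ N and local defining map) is injective. Conversely, if a cellular automaton τ : A^M → A^M with memory set contained in N is surjective, then its restriction τ_N : A^N → A^N is surjective. -/
theorem induction_restriction_of_cellular_automata
    {M A : Type*} [Monoid M] (N : Submonoid M) (S : Finset N) (μ : (S → A) → A) :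
    (Function.Injective (fun (y : N → A) (n : N) => μ (fun s => y (↑s * n))) →
      Function.Injective (fun (x : M → A) (m : M) => μ (fun s => x ((↑s : M) * m)))) ∧
    (Function.Surjective (fun (x : M → A) (m : M) => μ (fun s => x ((↑s : M) * m))) →
      Function.Surjective (fun (y : N → A) (n : N) => μ (fun s => y (↑s * n)))) := by
  constructor
  · intro hinj x x' h
    funext m
    have h2 : (fun (y : N → A) (n : N) => μ (fun s => y (↑s * n)))
        (fun k : N => x (↑k * m)) =
        (fun (y : N → A) (n : N) => μ (fun s => y (↑s * n)))
        (fun k : N => x' (↑k * m)) := by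
      funext n
      have := congrFun h (↑n * m)
      simpa [mul_assoc] using this
    have h3 : (fun k : N => x (↑k * m)) = (fun k : N => x' (↑k * m)) := hinj h2
    have := congrFun h3 1
    simpa using this
  · intro hsurj y
    classical
    obtain ⟨x, hx⟩ := hsurj (fun m => if h : m ∈ N then y ⟨m, h⟩ else y 1)
    refine ⟨fun n => x ↑n, ?_⟩
    funext n
    have := congrFun hx ↑n
    simpa [n.2] using this
end
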